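/- arXiv:1511.01263 — 2 statements merged into one kernel-verified Lean document; each statement's English description precedes it below -/
import Mathlib

section
/- For t ≠ 0 and φ ∈ 𝒮(ℝ), the remainder A_φ(t,x) = e^{it∂ₓₓ}φ(x) - (2it)^{-1/2} e^{ix²/(4t)} φ̂(x/(2t)) satisfies, for every 0 < β < 1/4, ‖A_φ(t,·)‖_{L^∞} ≲ |t|^{-1/2-β} ‖⟨x⟩φ‖_{L²(ℝ)}. -/
/-!
Expanding `(x - y)² = x² - 2xy + y²` in the kernel gives
`e^{it∂ₓₓ}φ(x) = (4iπt)^{-1/2} e^{ix²/(4t)} ∫ e^{iy²/(4t)} e^{-ixy/(2t)} φ(y) dy`,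
and the main term is the same integral with the chirp `e^{iy²/(4t)}` replaced by `1`. Hence
`|A_φ(t,x)| ≤ |t|^{-1/2} ∫ |e^{iy²/(4t)} - 1| |φ(y)| dy`, and interpolating
`|e^{iθ} - 1| ≤ min 2 |θ|` gives `|e^{iy²/(4t)} - 1| ≤ 2 |t|^{-β} ⟨y⟩^{2β}`. Cauchy–Schwarz against
the weight `⟨y⟩^{2β-1}`, which is square integrable exactly when `β < 1/4`, finishes the proof.
-/

open MeasureTheory Real

/-- Fourier transform with convention `φ̂(ξ) = (2π)^{-1/2} ∫ e^{-ixξ} φ(x) dx`. -/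
noncomputable def ft (φ : ℝ → ℂ) (ξ : ℝ) : ℂ :=
  (1 / Real.sqrt (2 * π) : ℝ) * ∫ x : ℝ, Complex.exp (-(Complex.I) * x * ξ) * φ x

/-- The free Schrödinger evolution `e^{it∂ₓₓ}φ = K_t * φ`,
with `K_t(x) = (4iπt)^{-1/2} e^{-x²/(4it)}`. -/
noncomputable def schrod (t : ℝ) (φ : ℝ → ℂ) (x : ℝ) : ℂ :=
  ∫ y : ℝ, (4 * (π : ℂ) * Complex.I * t) ^ (-(1 / 2) : ℂ) *
    Complex.exp (Complex.I * ((x : ℂ) - y) ^ 2 / (4 * t)) * φ y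

/-- The remainder `A_φ(t,x) = e^{it∂ₓₓ}φ(x) - (2it)^{-1/2} e^{ix²/(4t)} φ̂(x/(2t))`. -/
noncomputable def remA (t : ℝ) (φ : ℝ → ℂ) (x : ℝ) : ℂ :=
  schrod t φ x -
    (2 * Complex.I * t) ^ (-(1 / 2) : ℂ) * Complex.exp (Complex.I * x ^ 2 / (4 * t)) *
      ft φ (x / (2 * t))

theorem Complex.ofReal_mul_cpow {a : ℝ} (ha : 0 < a) (z w : ℂ) :
    ((a : ℂ) * z) ^ w = (a : ℂ) ^ w * z ^ w := by
  rcases eq_or_ne z 0 with rfl | hz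
  · rcases eq_or_ne w 0 with rfl | hw <;> simp [*]
  have ha' : (a : ℂ) ≠ 0 := Complex.ofReal_ne_zero.mpr ha.ne'
  rw [Complex.cpow_def_of_ne_zero (mul_ne_zero ha' hz), Complex.cpow_def_of_ne_zero ha',
    Complex.cpow_def_of_ne_zero hz, ← Complex.exp_add, Complex.log_ofReal_mul ha hz,
    Complex.ofReal_log ha.le, add_mul]

theorem cpow_neg_half_two_I_mul_mul_inv_sqrt_two_pi (t : ℝ) :
    (2 * Complex.I * t) ^ (-(1 / 2) : ℂ) * ((1 / √(2 * π) : ℝ) : ℂ) =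
      (4 * π * Complex.I * t) ^ (-(1 / 2) : ℂ) := by
  have h2π : 0 < 2 * π := by positivity
  rw [show (4 * π * Complex.I * t : ℂ) = ((2 * π : ℝ) : ℂ) * (2 * Complex.I * t) by
      push_cast; ring, Complex.ofReal_mul_cpow h2π, mul_comm,
    show (-(1 / 2) : ℂ) = ((-(1 / 2) : ℝ) : ℂ) by norm_num, ← Complex.ofReal_cpow h2π.le,
    Real.rpow_neg h2π.le, Real.sqrt_eq_rpow, one_div]

theorem norm_cexp_I_mul_sq_div (y t : ℝ) :
    ‖Complex.exp (Complex.I * y ^ 2 / (4 * t))‖ = 1 := by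
  rw [show Complex.I * y ^ 2 / (4 * t) = ((y ^ 2 / (4 * t) : ℝ) : ℂ) * Complex.I by
      push_cast; ring, Complex.norm_exp_ofReal_mul_I]

theorem norm_cexp_neg_I_mul_mul (y ξ : ℝ) : ‖Complex.exp (-Complex.I * y * ξ)‖ = 1 := by
  rw [show -Complex.I * y * ξ = ((-(y * ξ)) : ℝ) * Complex.I by push_cast; ring,
    Complex.norm_exp_ofReal_mul_I]

theorem remA_eq_integral {φ : ℝ → ℂ} (hφ : Integrable φ) {t : ℝ} (ht : t ≠ 0) (x : ℝ) :
    remA t φ x = (4 * π * Complex.I * t) ^ (-(1 / 2) : ℂ) *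
      Complex.exp (Complex.I * x ^ 2 / (4 * t)) *
      ∫ y : ℝ, (Complex.exp (Complex.I * y ^ 2 / (4 * t)) - 1) *
        (Complex.exp (-Complex.I * y * ((x / (2 * t) : ℝ) : ℂ)) * φ y) := by
  set ξ : ℝ := x / (2 * t)
  set K : ℂ := (4 * π * Complex.I * t) ^ (-(1 / 2) : ℂ)
  set chirp : ℝ → ℂ := fun y => Complex.exp (Complex.I * y ^ 2 / (4 * t))
  have hmodulated : Integrable (fun y : ℝ => Complex.exp (-Complex.I * y * ξ) * φ y) :=
    hφ.bdd_mul (c := 1) (by fun_prop) (.of_forall fun y => (norm_cexp_neg_I_mul_mul y ξ).le)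
  have hchirped :
      Integrable (fun y : ℝ => chirp y * (Complex.exp (-Complex.I * y * ξ) * φ y)) :=
    hmodulated.bdd_mul (c := 1) (by fun_prop) (.of_forall fun y => (norm_cexp_I_mul_sq_div y t).le)
  have hschrod : schrod t φ x =
      ∫ y : ℝ, K * chirp x * (chirp y * (Complex.exp (-Complex.I * y * ξ) * φ y)) := by
    refine integral_congr_ae (.of_forall fun y => ?_)
    have htc : (t : ℂ) ≠ 0 := Complex.ofReal_ne_zero.mpr ht
    have hphase : Complex.exp (Complex.I * ((x : ℂ) - y) ^ 2 / (4 * t)) =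
        chirp x * (chirp y * Complex.exp (-Complex.I * y * ξ)) := by
      rw [← Complex.exp_add, ← Complex.exp_add, Complex.ofReal_div]
      congr 1
      push_cast
      field_simp
      ring
    simp only [hphase]
    ring
  have hft : (2 * Complex.I * t) ^ (-(1 / 2) : ℂ) * chirp x * ft φ ξ =
      ∫ y : ℝ, K * chirp x * (Complex.exp (-Complex.I * y * ξ) * φ y) := by
    rw [ft, integral_const_mul,
      show K = _ from (cpow_neg_half_two_I_mul_mul_inv_sqrt_two_pi t).symm]
    ring
  rw [remA, hschrod, hft, ← integral_sub (hchirped.const_mul _) (hmodulated.const_mul _),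
    ← integral_const_mul]
  congr 1
  ext y
  ring

theorem Complex.norm_exp_I_mul_ofReal_sub_one_le_rpow (θ : ℝ) {β : ℝ} (hβ0 : 0 ≤ β)
    (hβ1 : β ≤ 1) : ‖Complex.exp (Complex.I * θ) - 1‖ ≤ 2 * |θ| ^ β := by
  rcases le_or_gt |θ| 1 with hθ | hθ
  · calc ‖Complex.exp (Complex.I * θ) - 1‖ ≤ |θ| := Real.norm_exp_I_mul_ofReal_sub_one_le
      _ ≤ |θ| ^ β := Real.self_le_rpow_of_le_one (abs_nonneg θ) hθ hβ1
      _ ≤ 2 * |θ| ^ β := by linarith [Real.rpow_nonneg (abs_nonneg θ) β]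
  · calc ‖Complex.exp (Complex.I * θ) - 1‖ ≤ ‖Complex.exp (Complex.I * θ)‖ + ‖(1 : ℂ)‖ :=
          norm_sub_le _ _
      _ = 2 := by rw [mul_comm, Complex.norm_exp_ofReal_mul_I]; norm_num
      _ ≤ 2 * |θ| ^ β := by linarith [Real.one_le_rpow hθ.le hβ0]

theorem norm_cexp_I_mul_sq_div_sub_one_le {t : ℝ} (ht : t ≠ 0) {β : ℝ} (hβ0 : 0 ≤ β)
    (hβ1 : β ≤ 1) (y : ℝ) :
    ‖Complex.exp (Complex.I * y ^ 2 / (4 * t)) - 1‖ ≤ 2 * |t| ^ (-β) * (1 + y ^ 2) ^ β := by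
  have ht' : 0 < |t| := abs_pos.mpr ht
  have hθ : |y ^ 2 / (4 * t)| ≤ (1 + y ^ 2) / |t| := by
    rw [abs_div, abs_mul, abs_of_nonneg (sq_nonneg y), abs_of_pos (by norm_num : (0 : ℝ) < 4)]
    gcongr <;> linarith [sq_nonneg y]
  calc ‖Complex.exp (Complex.I * y ^ 2 / (4 * t)) - 1‖
      = ‖Complex.exp (Complex.I * ((y ^ 2 / (4 * t) : ℝ) : ℂ)) - 1‖ := by push_cast; ring_nf
    _ ≤ 2 * |y ^ 2 / (4 * t)| ^ β := Complex.norm_exp_I_mul_ofReal_sub_one_le_rpow _ hβ0 hβ1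
    _ ≤ 2 * ((1 + y ^ 2) / |t|) ^ β := by gcongr
    _ = 2 * |t| ^ (-β) * (1 + y ^ 2) ^ β := by
      rw [Real.div_rpow (by positivity) ht'.le, Real.rpow_neg ht'.le]
      ring

theorem norm_cpow_neg_half_four_pi_I_mul_le {t : ℝ} (ht : t ≠ 0) :
    ‖(4 * π * Complex.I * t) ^ (-(1 / 2) : ℂ)‖ ≤ |t| ^ (-(1 / 2) : ℝ) := by
  have hnorm : ‖(4 * π * Complex.I * t : ℂ)‖ = 4 * π * |t| := by
    simp [abs_of_pos Real.pi_pos]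
  rw [show (-(1 / 2) : ℂ) = ((-(1 / 2) : ℝ) : ℂ) by norm_num, Complex.norm_cpow_real, hnorm]
  exact Real.rpow_le_rpow_of_nonpos (abs_pos.mpr ht)
    (le_mul_of_one_le_left (abs_nonneg t) (by linarith [Real.pi_gt_three])) (by norm_num)

theorem enorm_remA_le {φ : ℝ → ℂ} (hφ : Integrable φ) {t : ℝ} (ht : t ≠ 0) {β : ℝ}
    (hβ0 : 0 ≤ β) (hβ1 : β ≤ 1) (x : ℝ) :
    ‖remA t φ x‖ₑ ≤ ENNReal.ofReal (2 * |t| ^ (-(1 / 2) - β)) *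
      eLpNorm (fun y : ℝ => (1 + y ^ 2) ^ β • φ y) 1 volume := by
  have hintegrand : ∀ y : ℝ, ‖(Complex.exp (Complex.I * y ^ 2 / (4 * t)) - 1) *
      (Complex.exp (-Complex.I * y * ((x / (2 * t) : ℝ) : ℂ)) * φ y)‖ ≤
      2 * |t| ^ (-β) * ‖(1 + y ^ 2) ^ β • φ y‖ := fun y => by
    rw [norm_mul, norm_mul, norm_cexp_neg_I_mul_mul, one_mul, norm_smul,
      Real.norm_of_nonneg (by positivity), ← mul_assoc]
    gcongr
    exact norm_cexp_I_mul_sq_div_sub_one_le ht hβ0 hβ1 y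
  rw [remA_eq_integral hφ ht, enorm_mul, enorm_mul, ← ofReal_norm (Complex.exp _),
    norm_cexp_I_mul_sq_div, ENNReal.ofReal_one, mul_one]
  calc _ ≤ ENNReal.ofReal (|t| ^ (-(1 / 2) : ℝ)) * (ENNReal.ofReal (2 * |t| ^ (-β)) *
        eLpNorm (fun y : ℝ => (1 + y ^ 2) ^ β • φ y) 1 volume) := by
        gcongr
        · rw [← ofReal_norm]
          exact ENNReal.ofReal_le_ofReal (norm_cpow_neg_half_four_pi_I_mul_le ht)
        · refine (enorm_integral_le_lintegral_enorm _).trans ?_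
          rw [← eLpNorm_one_eq_lintegral_enorm]
          exact eLpNorm_le_mul_eLpNorm_of_ae_le_mul (.of_forall hintegrand) 1
    _ = _ := by
        rw [← mul_assoc, ← ENNReal.ofReal_mul (by positivity), sub_eq_add_neg,
          Real.rpow_add (abs_pos.mpr ht)]
        ring_nf

theorem eLpNorm_one_add_sq_rpow_smul_le {φ : ℝ → ℂ} (hφ : AEStronglyMeasurable φ) (β : ℝ) :
    eLpNorm (fun y : ℝ => (1 + y ^ 2) ^ β • φ y) 1 volume ≤
      eLpNorm (fun y : ℝ => (1 + y ^ 2) ^ (β - 1 / 2)) 2 volume *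
        eLpNorm (fun y : ℝ => √(1 + y ^ 2) • φ y) 2 volume := by
  have hsplit : (fun y : ℝ => (1 + y ^ 2) ^ β • φ y) =
      (fun y : ℝ => (1 + y ^ 2) ^ (β - 1 / 2)) • (fun y : ℝ => √(1 + y ^ 2) • φ y) := by
    ext y
    rw [Pi.smul_apply', smul_smul, Real.sqrt_eq_rpow, ← Real.rpow_add (by positivity)]
    norm_num
  rw [hsplit]
  exact eLpNorm_smul_le_mul_eLpNorm (by fun_prop) (Measurable.aestronglyMeasurable (by fun_prop))

theorem memLp_one_add_sq_rpow_sub_half {β : ℝ} (hβ : β < 1 / 4) :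
    MemLp (fun y : ℝ => (1 + y ^ 2) ^ (β - 1 / 2)) 2 volume := by
  refine (memLp_two_iff_integrable_sq (Measurable.aestronglyMeasurable (by fun_prop))).mpr ?_
  have hint := integrable_rpow_neg_one_add_norm_sq (E := ℝ) (μ := volume) (r := 2 - 4 * β)
    (by simp; linarith)
  refine hint.congr (.of_forall fun y => ?_)
  dsimp only
  rw [Real.norm_eq_abs, sq_abs, ← Real.rpow_mul_natCast (by positivity)]
  congr 1
  push_cast
  ring

theorem SchwartzMap.memLp_sqrt_one_add_sq_smul (φ : SchwartzMap ℝ ℂ) :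
    MemLp (fun y : ℝ => √(1 + y ^ 2) • φ y) 2 volume := by
  have hg := Function.hasTemperateGrowth_one_add_norm_sq_rpow ℝ (1 / 2 : ℝ)
  have h := (SchwartzMap.smulLeftCLM ℂ (fun y : ℝ => (1 + ‖y‖ ^ 2) ^ (1 / 2 : ℝ)) φ).memLp 2
    (μ := volume)
  rw [SchwartzMap.smulLeftCLM_apply hg] at h
  simpa only [Real.norm_eq_abs, sq_abs, ← Real.sqrt_eq_rpow] using h

theorem stmt_7 (β : ℝ) (hβ0 : 0 < β) (hβ1 : β < 1 / 4) :
    ∃ C : ℝ, 0 < C ∧ ∀ (φ : SchwartzMap ℝ ℂ) (t : ℝ), t ≠ 0 → ∀ x : ℝ,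
      ‖remA t (fun y => φ y) x‖ ≤
        C * |t| ^ (-(1 / 2) - β) *
          (eLpNorm (fun y : ℝ => Real.sqrt (1 + y ^ 2) • φ y) 2 (volume : Measure ℝ)).toReal := by
  have hweight := memLp_one_add_sq_rpow_sub_half hβ1
  set W := eLpNorm (fun y : ℝ => (1 + y ^ 2) ^ (β - 1 / 2)) 2 volume
  refine ⟨2 * W.toReal + 1, by positivity, fun φ t ht x => ?_⟩
  set N := eLpNorm (fun y : ℝ => √(1 + y ^ 2) • φ y) 2 volume
  have hbound :
      ‖remA t (fun y => φ y) x‖ₑ ≤ ENNReal.ofReal (2 * |t| ^ (-(1 / 2) - β)) * (W * N) :=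
    (enorm_remA_le φ.integrable ht hβ0.le (by linarith) x).trans
      (by gcongr; exact eLpNorm_one_add_sq_rpow_smul_le φ.continuous.aestronglyMeasurable β)
  have hreal := ENNReal.toReal_mono (by finiteness [hweight.eLpNorm_ne_top,
    φ.memLp_sqrt_one_add_sq_smul.eLpNorm_ne_top]) hbound
  rw [ENNReal.toReal_mul, ENNReal.toReal_mul, ENNReal.toReal_ofReal (by positivity),
    toReal_enorm] at hreal
  calc ‖remA t (fun y => φ y) x‖ ≤ 2 * W.toReal * |t| ^ (-(1 / 2) - β) * N.toReal := by
        linarith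
    _ ≤ (2 * W.toReal + 1) * |t| ^ (-(1 / 2) - β) * N.toReal := by gcongr; linarith
end

section
/- Let w : [1,∞) → ℂ be differentiable in t (for each fixed ξ, suppressed) with |w(t)| ≤ C₀ and |w(t₂) - w(t₁)| ≤ C|t₂^{-κ} - t₁^{-κ}| for all 1 ≤ t₁ ≤ t₂, where κ > 0. Define γ(t) = ∫₁ᵗ (|w(τ)|² - |w(t)|²) dτ/τ. Then there exists Γ ∈ ℂ such that |γ(s) - Γ| ≲ s^{-κ} ln(s) + s^{-κ} for all s ≥ 1; in particular γ(s) converges as s → ∞. -/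
/-! Writing `f = |w|²`, the Hölder bound makes `f` oscillate by at most `2 C₀ C s^{-κ}` on
`[s, ∞)`. For `1 ≤ s ≤ t`,
`γ(t) - γ(s) = ∫ₛᵗ (f(τ) - f(t)) dτ/τ + (f(s) - f(t)) ln s`,
so `|γ(t) - γ(s)| ≲ s^{-κ} + s^{-κ} ln s`. This tends to `0`, hence `γ` is Cauchy at infinity,
and letting `t → ∞` gives the same bound for `|γ(s) - Γ|`. -/

open MeasureTheory Real intervalIntegral Filter Topology Set

lemma abs_sq_norm_sub_sq_norm_le {E : Type*} [SeminormedAddCommGroup E] {a b : E} {M : ℝ}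
    (ha : ‖a‖ ≤ M) (hb : ‖b‖ ≤ M) : |‖a‖ ^ 2 - ‖b‖ ^ 2| ≤ 2 * M * ‖a - b‖ := by
  have hsum : |‖a‖ + ‖b‖| ≤ 2 * M := by
    rw [abs_of_nonneg (by positivity)]
    linarith
  calc |‖a‖ ^ 2 - ‖b‖ ^ 2| = |‖a‖ + ‖b‖| * |‖a‖ - ‖b‖| := by rw [← abs_mul]; ring_nf
    _ ≤ 2 * M * ‖a - b‖ :=
      mul_le_mul hsum (abs_norm_sub_norm_le a b) (abs_nonneg _) (by linarith [norm_nonneg a])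

lemma abs_rpow_neg_sub_rpow_neg_le {s t κ : ℝ} (hs : 0 < s) (hst : s ≤ t) (hκ : 0 ≤ κ) :
    |t ^ (-κ) - s ^ (-κ)| ≤ s ^ (-κ) := by
  have hanti : t ^ (-κ) ≤ s ^ (-κ) := rpow_le_rpow_of_nonpos hs hst (neg_nonpos.mpr hκ)
  have hnonneg : 0 ≤ t ^ (-κ) := rpow_nonneg (hs.le.trans hst) _
  rw [abs_sub_comm, abs_of_nonneg (sub_nonneg.mpr hanti)]
  linarith

lemma abs_sq_norm_sub_sq_norm_le_of_abs_rpow_neg {E : Type*} [SeminormedAddCommGroup E]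
    {w : ℝ → E} {C₀ C κ : ℝ} (hC : 0 ≤ C) (hκ : 0 ≤ κ) (hbd : ∀ t, 1 ≤ t → ‖w t‖ ≤ C₀)
    (hcau : ∀ t₁ t₂, 1 ≤ t₁ → t₁ ≤ t₂ → ‖w t₂ - w t₁‖ ≤ C * |t₂ ^ (-κ) - t₁ ^ (-κ)|)
    {t₁ t₂ : ℝ} (h₁ : 1 ≤ t₁) (h₁₂ : t₁ ≤ t₂) :
    |‖w t₂‖ ^ 2 - ‖w t₁‖ ^ 2| ≤ 2 * C₀ * C * t₁ ^ (-κ) := by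
  have hC₀ : 0 ≤ C₀ := (norm_nonneg _).trans (hbd 1 le_rfl)
  calc |‖w t₂‖ ^ 2 - ‖w t₁‖ ^ 2| ≤ 2 * C₀ * ‖w t₂ - w t₁‖ :=
        abs_sq_norm_sub_sq_norm_le (hbd t₂ (h₁.trans h₁₂)) (hbd t₁ h₁)
    _ ≤ 2 * C₀ * (C * t₁ ^ (-κ)) := by
        gcongr
        exact (hcau t₁ t₂ h₁ h₁₂).trans <| mul_le_mul_of_nonneg_left
          (abs_rpow_neg_sub_rpow_neg_le (one_pos.trans_le h₁) h₁₂ hκ) hC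
    _ = 2 * C₀ * C * t₁ ^ (-κ) := by ring

lemma integral_rpow_neg_sub_one_le {s t κ : ℝ} (hs : 0 < s) (hst : s ≤ t) (hκ : 0 < κ) :
    ∫ τ in s..t, τ ^ (-κ - 1) ≤ s ^ (-κ) / κ := by
  rw [integral_rpow (Or.inr ⟨by linarith, notMem_uIcc_of_lt hs (hs.trans_le hst)⟩),
    show -κ - 1 + 1 = -κ by ring, div_neg, ← neg_div, neg_sub]
  gcongr
  linarith [rpow_nonneg (hs.le.trans hst) (-κ)]

lemma exists_dist_le_of_dist_le_of_tendsto {E : Type*} [PseudoMetricSpace E] [CompleteSpace E]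
    {g : ℝ → E} {B : ℝ → ℝ} {a : ℝ} (hg : ∀ s t, a ≤ s → s ≤ t → dist (g s) (g t) ≤ B s)
    (hB : Tendsto B atTop (𝓝 0)) : ∃ Γ, ∀ s, a ≤ s → dist (g s) Γ ≤ B s := by
  have hcauchy : CauchySeq fun s => g (max s a) :=
    cauchySeq_of_le_tendsto_0' (fun s => B (max s a))
      (fun s t hst => hg _ _ (le_max_right _ _) (max_le_max_right a hst))
      (hB.comp (tendsto_atTop_atTop_of_monotone (fun _ _ h => max_le_max_right a h)
        fun b => ⟨b, le_max_left _ _⟩))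
  obtain ⟨Γ, hΓ⟩ := cauchySeq_tendsto_of_complete hcauchy
  refine ⟨Γ, fun s hs => le_of_tendsto (tendsto_const_nhds.dist hΓ) ?_⟩
  filter_upwards [eventually_ge_atTop s] with t hst
  exact hg s _ hs (hst.trans (le_max_left _ _))

lemma tendsto_rpow_neg_mul_log_add_rpow_neg {κ : ℝ} (hκ : 0 < κ) :
    Tendsto (fun s : ℝ => s ^ (-κ) * log s + s ^ (-κ)) atTop (𝓝 0) := by
  have hlog : Tendsto (fun s : ℝ => s ^ (-κ) * log s) atTop (𝓝 0) := by
    refine (isLittleO_log_rpow_atTop hκ).tendsto_div_nhds_zero.congr' ?_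
    filter_upwards [eventually_gt_atTop 0] with s hs
    rw [rpow_neg hs.le, div_eq_inv_mul]
  simpa using hlog.add (tendsto_rpow_neg_atTop hκ)

/-- The function `γ` of the statement, for `f = |w|²`. -/
noncomputable def logDeviationIntegral (f : ℝ → ℝ) (t : ℝ) : ℝ :=
  ∫ τ in (1 : ℝ)..t, (f τ - f t) / τ

section LogDeviation

variable {f : ℝ → ℝ}

lemma zero_notMem_uIcc_of_one_le {a b : ℝ} (ha : 1 ≤ a) (hb : 1 ≤ b) : (0 : ℝ) ∉ uIcc a b :=
  notMem_uIcc_of_lt (one_pos.trans_le ha) (one_pos.trans_le hb)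

lemma intervalIntegrable_sub_const_div (hf : ContinuousOn f (Ici 1)) (c : ℝ) {a b : ℝ}
    (ha : 1 ≤ a) (hb : 1 ≤ b) : IntervalIntegrable (fun τ => (f τ - c) / τ) volume a b := by
  refine ContinuousOn.intervalIntegrable ((hf.mono ?_).sub continuousOn_const |>.div
    continuousOn_id fun τ hτ => ?_)
  · exact fun τ hτ => (le_min ha hb).trans hτ.1
  · exact ne_of_mem_of_not_mem hτ (zero_notMem_uIcc_of_one_le ha hb)

lemma logDeviationIntegral_sub (hf : ContinuousOn f (Ici 1)) {s t : ℝ} (hs : 1 ≤ s)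
    (hst : s ≤ t) :
    logDeviationIntegral f t - logDeviationIntegral f s =
      (∫ τ in s..t, (f τ - f t) / τ) + (f s - f t) * log s := by
  have ht : 1 ≤ t := hs.trans hst
  have hshift : (∫ τ in (1 : ℝ)..s, (f τ - f t) / τ) - ∫ τ in (1 : ℝ)..s, (f τ - f s) / τ
      = (f s - f t) * log s := by
    rw [← integral_sub (intervalIntegrable_sub_const_div hf _ le_rfl hs)
      (intervalIntegrable_sub_const_div hf _ le_rfl hs),
      integral_congr (g := fun τ => (f s - f t) * τ⁻¹) fun τ _ => by ring,
      intervalIntegral.integral_const_mul, integral_inv (zero_notMem_uIcc_of_one_le le_rfl hs),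
      div_one]
  rw [logDeviationIntegral, logDeviationIntegral, ← integral_add_adjacent_intervals
    (intervalIntegrable_sub_const_div hf _ le_rfl hs) (intervalIntegrable_sub_const_div hf _ hs ht),
    ← hshift]
  ring

lemma abs_logDeviationIntegral_sub_le (hf : ContinuousOn f (Ici 1)) {D κ : ℝ} (hκ : 0 < κ)
    (hosc : ∀ t₁ t₂, 1 ≤ t₁ → t₁ ≤ t₂ → |f t₂ - f t₁| ≤ D * t₁ ^ (-κ)) {s t : ℝ} (hs : 1 ≤ s)
    (hst : s ≤ t) :
    |logDeviationIntegral f t - logDeviationIntegral f s| ≤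
      D / κ * s ^ (-κ) + D * s ^ (-κ) * log s := by
  have hD : 0 ≤ D := by simpa using (abs_nonneg _).trans (hosc 1 1 le_rfl le_rfl)
  have hspos : 0 < s := one_pos.trans_le hs
  have hintegral : |∫ τ in s..t, (f τ - f t) / τ| ≤ D / κ * s ^ (-κ) := by
    have hpointwise : ∀ τ ∈ Ioc s t, ‖(f τ - f t) / τ‖ ≤ D * τ ^ (-κ - 1) := by
      intro τ hτ
      have hτpos : 0 < τ := hspos.trans hτ.1
      rw [norm_div, norm_of_nonneg hτpos.le, Real.norm_eq_abs, abs_sub_comm, div_le_iff₀ hτpos,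
        mul_assoc, ← rpow_add_one hτpos.ne', sub_add_cancel]
      exact hosc τ t (hs.trans hτ.1.le) hτ.2
    calc |∫ τ in s..t, (f τ - f t) / τ|
        ≤ ∫ τ in s..t, D * τ ^ (-κ - 1) :=
          norm_integral_le_of_norm_le hst (ae_of_all _ hpointwise)
            ((intervalIntegrable_rpow (Or.inr (zero_notMem_uIcc_of_one_le hs
              (hs.trans hst)))).const_mul D)
      _ = D * ∫ τ in s..t, τ ^ (-κ - 1) := intervalIntegral.integral_const_mul D _
      _ ≤ D * (s ^ (-κ) / κ) := by gcongr; exact integral_rpow_neg_sub_one_le hspos hst hκ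
      _ = D / κ * s ^ (-κ) := by ring
  have hboundary : |(f s - f t) * log s| ≤ D * s ^ (-κ) * log s := by
    rw [abs_mul, abs_of_nonneg (log_nonneg hs), abs_sub_comm]
    exact mul_le_mul_of_nonneg_right (hosc s t hs hst) (log_nonneg hs)
  rw [logDeviationIntegral_sub hf hs hst]
  exact (abs_add_le _ _).trans (add_le_add hintegral hboundary)

end LogDeviation

theorem stmt_15 (w : ℝ → ℂ) (C₀ C κ : ℝ) (hκ : 0 < κ) (hC : 0 < C)
    (hdiff : Differentiable ℝ w)
    (hbd : ∀ t : ℝ, 1 ≤ t → ‖w t‖ ≤ C₀)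
    (hcau : ∀ t₁ t₂ : ℝ, 1 ≤ t₁ → t₁ ≤ t₂ → ‖w t₂ - w t₁‖ ≤ C * |t₂ ^ (-κ) - t₁ ^ (-κ)|)
    (γ : ℝ → ℝ)
    (hγ : ∀ t : ℝ, γ t = ∫ τ in (1 : ℝ)..t, (‖w τ‖ ^ 2 - ‖w t‖ ^ 2) / τ) :
    ∃ Γ : ℝ, ∃ K : ℝ, 0 < K ∧
      ∀ s : ℝ, 1 ≤ s → |γ s - Γ| ≤ K * (s ^ (-κ) * Real.log s + s ^ (-κ)) := by
  have hγf : γ = logDeviationIntegral fun t => ‖w t‖ ^ 2 := funext hγ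
  have hC₀ : 0 ≤ C₀ := (norm_nonneg _).trans (hbd 1 le_rfl)
  set D := 2 * C₀ * C
  have hD : 0 ≤ D := by positivity
  set K := D / κ + D + 1
  have hdist : ∀ s t, 1 ≤ s → s ≤ t → dist (γ s) (γ t) ≤ K * (s ^ (-κ) * log s + s ^ (-κ)) := by
    intro s t hs hst
    have hpow : 0 ≤ s ^ (-κ) := rpow_nonneg (zero_le_one.trans hs) _
    have hpowlog : 0 ≤ s ^ (-κ) * log s := mul_nonneg hpow (log_nonneg hs)
    rw [dist_comm, Real.dist_eq, hγf]
    refine (abs_logDeviationIntegral_sub_le (hdiff.continuous.norm.pow 2).continuousOn hκ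
      (fun _ _ => abs_sq_norm_sub_sq_norm_le_of_abs_rpow_neg hC.le hκ.le hbd hcau) hs hst).trans ?_
    nlinarith [mul_nonneg (div_nonneg hD hκ.le) hpowlog, mul_nonneg hD hpow]
  obtain ⟨Γ, hΓ⟩ := exists_dist_le_of_dist_le_of_tendsto hdist
    (by simpa using (tendsto_rpow_neg_mul_log_add_rpow_neg hκ).const_mul K)
  exact ⟨Γ, K, by positivity, fun s hs => Real.dist_eq _ Γ ▸ hΓ s hs⟩
end
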